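/- arXiv:2111.14499 — 3 statements merged into one kernel-verified Lean document; each statement's English description precedes it below -/
import Mathlib

section
/- For every x ∈ ℝ with x ≠ 0 and x ≠ 2, the Schwarzian derivative of the one-dimensional Chialvo map f_{r,k}(x) = x²·exp(r − x) + k satisfies the identity Sf(x) = −(1/2)·(x⁴ − 8x³ + 24x² − 24x + 12)/(2x − x²)² = −(1/2)·((x² − 4x + 2)² + 4(x − 1)² + 4)/(2x − x²)², independently of r and k. -/
/-!
Every derivative of `y ↦ p(y) e^{r-y}` with `p` a polynomial has the same shape, with `p`
replaced by `p' - p`. Starting from `p = X²` this gives the polynomials `2x - x²`,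
`x² - 4x + 2` and `-x² + 6x - 6` for `f'`, `f''`, `f'''`; the common factor `e^{r-x}` cancels
in the Schwarzian, which leaves a rational function of `x` alone.
-/

open Real Polynomial

theorem hasDerivAt_eval_mul_exp_sub (p : ℝ[X]) (r y : ℝ) :
    HasDerivAt (fun y => p.eval y * exp (r - y)) ((derivative p - p).eval y * exp (r - y)) y := by
  have he : HasDerivAt (fun y => exp (r - y)) (-exp (r - y)) y := by
    simpa using ((hasDerivAt_id y).const_sub r).exp
  exact ((p.hasDerivAt y).mul he).congr_deriv (by rw [eval_sub]; ring)

theorem deriv_eval_mul_exp_sub {p q : ℝ[X]} (r : ℝ) (hpq : derivative p - p = q) :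
    deriv (fun y => p.eval y * exp (r - y)) = fun y => q.eval y * exp (r - y) :=
  funext fun y => hpq ▸ (hasDerivAt_eval_mul_exp_sub p r y).deriv

theorem deriv_chialvo (r k : ℝ) :
    deriv (fun y : ℝ => y ^ 2 * exp (r - y) + k) =
      fun y => (2 * X - X ^ 2 : ℝ[X]).eval y * exp (r - y) := by
  have hf : (fun y : ℝ => y ^ 2 * exp (r - y) + k) =
      fun y => (X ^ 2 : ℝ[X]).eval y * exp (r - y) + k := by simp
  rw [hf, deriv_add_const', deriv_eval_mul_exp_sub r (by rw [derivative_X_sq, C_ofNat])]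

theorem deriv_deriv_chialvo (r k : ℝ) :
    deriv (deriv fun y : ℝ => y ^ 2 * exp (r - y) + k) =
      fun y => (X ^ 2 - 4 * X + 2 : ℝ[X]).eval y * exp (r - y) := by
  rw [deriv_chialvo, deriv_eval_mul_exp_sub r]
  simp only [derivative_sub, derivative_mul, derivative_X_sq, derivative_X, derivative_ofNat,
    C_ofNat]
  ring

theorem deriv_deriv_deriv_chialvo (r k : ℝ) :
    deriv (deriv (deriv fun y : ℝ => y ^ 2 * exp (r - y) + k)) =
      fun y => (-X ^ 2 + 6 * X - 6 : ℝ[X]).eval y * exp (r - y) := by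
  rw [deriv_deriv_chialvo, deriv_eval_mul_exp_sub r]
  simp only [derivative_add, derivative_sub, derivative_mul, derivative_X_sq, derivative_X,
    derivative_ofNat, C_ofNat]
  ring

/-- Explicit formula for the Schwarzian derivative of the 1D Chialvo map
`f_{r,k}(x) = x² exp(r − x) + k` at every non-critical point `x ≠ 0`, `x ≠ 2`:
`Sf(x) = −(1/2)(x⁴ − 8x³ + 24x² − 24x + 12)/(2x − x²)²
       = −(1/2)((x² − 4x + 2)² + 4(x − 1)² + 4)/(2x − x²)²`,
independently of `r` and `k`. -/
theorem chialvo_schwarzian_formula (r k x : ℝ) (hx0 : x ≠ 0) (hx2 : x ≠ 2) :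
    deriv (deriv (deriv (fun y : ℝ => y ^ 2 * Real.exp (r - y) + k))) x /
          deriv (fun y : ℝ => y ^ 2 * Real.exp (r - y) + k) x -
        (3 / 2) * (deriv (deriv (fun y : ℝ => y ^ 2 * Real.exp (r - y) + k)) x /
          deriv (fun y : ℝ => y ^ 2 * Real.exp (r - y) + k) x) ^ 2 =
      -(1 / 2) * (x ^ 4 - 8 * x ^ 3 + 24 * x ^ 2 - 24 * x + 12) / (2 * x - x ^ 2) ^ 2 ∧
    deriv (deriv (deriv (fun y : ℝ => y ^ 2 * Real.exp (r - y) + k))) x /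
          deriv (fun y : ℝ => y ^ 2 * Real.exp (r - y) + k) x -
        (3 / 2) * (deriv (deriv (fun y : ℝ => y ^ 2 * Real.exp (r - y) + k)) x /
          deriv (fun y : ℝ => y ^ 2 * Real.exp (r - y) + k) x) ^ 2 =
      -(1 / 2) * ((x ^ 2 - 4 * x + 2) ^ 2 + 4 * (x - 1) ^ 2 + 4) / (2 * x - x ^ 2) ^ 2 := by
  have hcrit : 2 * x - x ^ 2 ≠ 0 := by
    rw [show 2 * x - x ^ 2 = x * (2 - x) by ring]
    exact mul_ne_zero hx0 (sub_ne_zero.mpr hx2.symm)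
  have hsq : x ^ 4 - 8 * x ^ 3 + 24 * x ^ 2 - 24 * x + 12 =
      (x ^ 2 - 4 * x + 2) ^ 2 + 4 * (x - 1) ^ 2 + 4 := by ring
  rw [← hsq, and_self, deriv_deriv_deriv_chialvo, deriv_deriv_chialvo, deriv_chialvo]
  simp only [eval_add, eval_sub, eval_neg, eval_mul, eval_pow, eval_X, eval_ofNat]
  field_simp
  ring
end

section
/- Fix 0 < k < 3 − 2√2 and set x_{0,1} = (k + 1 − √(k² − 6k + 1))/2, x_{0,2} = (k + 1 + √(k² − 6k + 1))/2, and r_{0,i} = x_{0,i} − ln((2 − x_{0,i})·x_{0,i}) for i = 1, 2. Then k < x_{0,1} < x_{0,2} < 2, and for each i: x_{0,i} is a fixed point of the Chialvo map at parameter r_{0,i}, i.e. x_{0,i}²·exp(r_{0,i} − x_{0,i}) + k = x_{0,i}; the multiplier there is 1, i.e. x_{0,i}(2 − x_{0,i})·exp(r_{0,i} − x_{0,i}) = 1; ∂²f/∂x²(x_{0,i}, r_{0,i}) ≠ 0; and ∂f/∂r(x_{0,i}, r_{0,i}) ≠ 0. Hence the map undergoes a fold bifurcation at each of these two parameter values.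 -/
/-!
At a fixed point with multiplier one, `x (2 - x) e^{r - x} = 1` forces `r = x - log((2 - x) x)`,
and the fixed-point equation `x² e^{r - x} + k = x` then reduces to `x² - (k + 1) x + 2k = 0`,
whose roots are `x_{0,1}, x_{0,2}`. Since `∂²f/∂x² = (x² - 4x + 2) e^{r - x}`, the fold is
degenerate only at a common root of `x² - (k + 1) x + 2k` and `x² - 4x + 2`, which exists only when
the discriminant `k² - 6k + 1` vanishes; and `∂f/∂r = x² e^{r - x} > 0`.
-/

open Real

lemma hasDerivAt_sq_mul_exp_sub_add_const (r k x : ℝ) :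
    HasDerivAt (fun x : ℝ => x ^ 2 * exp (r - x) + k) ((2 * x - x ^ 2) * exp (r - x)) x := by
  refine (((hasDerivAt_pow 2 x).mul ((hasDerivAt_id x).const_sub r).exp).add_const k).congr_deriv ?_
  simp only [id, Nat.cast_ofNat, mul_one, mul_neg]
  ring

lemma hasDerivAt_two_mul_sub_sq_mul_exp_sub (r x : ℝ) :
    HasDerivAt (fun x : ℝ => (2 * x - x ^ 2) * exp (r - x))
      ((x ^ 2 - 4 * x + 2) * exp (r - x)) x := by
  refine ((((hasDerivAt_id x).const_mul 2).sub (hasDerivAt_pow 2 x)).mul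
    ((hasDerivAt_id x).const_sub r).exp).congr_deriv ?_
  simp only [id, Nat.cast_ofNat, Pi.sub_apply, mul_one, mul_neg]
  ring

lemma deriv_deriv_sq_mul_exp_sub_add_const (r k x : ℝ) :
    deriv (deriv (fun x : ℝ => x ^ 2 * exp (r - x) + k)) x =
      (x ^ 2 - 4 * x + 2) * exp (r - x) := by
  have hderiv : deriv (fun x : ℝ => x ^ 2 * exp (r - x) + k) =
      fun x => (2 * x - x ^ 2) * exp (r - x) :=
    funext fun x => (hasDerivAt_sq_mul_exp_sub_add_const r k x).deriv
  rw [hderiv, (hasDerivAt_two_mul_sub_sq_mul_exp_sub r x).deriv]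

lemma deriv_sq_mul_exp_sub_add_const_param (x k r : ℝ) :
    deriv (fun r : ℝ => x ^ 2 * exp (r - x) + k) r = x ^ 2 * exp (r - x) := by
  simp

lemma exp_sub_log_sub_self {x : ℝ} (hx : 0 < (2 - x) * x) :
    exp (x - log ((2 - x) * x) - x) = ((2 - x) * x)⁻¹ := by
  rw [sub_sub_cancel_left, exp_neg, exp_log hx]

lemma sq_eq_of_eq_add_sqrt_discr_div_two {k s x : ℝ} (hs : s ^ 2 = k ^ 2 - 6 * k + 1)
    (hx : x = (k + 1 + s) / 2) : x ^ 2 = (k + 1) * x - 2 * k := by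
  rw [hx]
  linear_combination hs / 4

lemma discr_eq_zero_of_common_root {k x : ℝ} (hP : x ^ 2 = (k + 1) * x - 2 * k)
    (hQ : x ^ 2 - 4 * x + 2 = 0) : k ^ 2 - 6 * k + 1 = 0 := by
  have hlin : (3 - k) * x = 2 * (1 - k) := by linear_combination hP - hQ
  -- substituting `hlin` into `(3 - k)² (x² - 4x + 2)` leaves `-2 (k² - 6k + 1)`
  linear_combination (-(3 - k) ^ 2 * hQ + ((3 - k) * x + 2 * (1 - k) - 4 * (3 - k)) * hlin) / 2

lemma chialvo_fold_conditions {k x r : ℝ} (hx0 : 0 < x) (hx2 : x < 2)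
    (hroot : x ^ 2 = (k + 1) * x - 2 * k) (hdiscr : k ^ 2 - 6 * k + 1 ≠ 0)
    (hr : r = x - log ((2 - x) * x)) :
    x ^ 2 * exp (r - x) + k = x ∧
    x * (2 - x) * exp (r - x) = 1 ∧
    deriv (deriv (fun x : ℝ => x ^ 2 * exp (r - x) + k)) x ≠ 0 ∧
    deriv (fun r : ℝ => x ^ 2 * exp (r - x) + k) r ≠ 0 := by
  have hpos : 0 < (2 - x) * x := mul_pos (by linarith) hx0
  have hexp : exp (r - x) = ((2 - x) * x)⁻¹ := hr ▸ exp_sub_log_sub_self hpos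
  refine ⟨?fixed, ?multiplier, ?curvature, ?transversality⟩
  case fixed =>
    have h2x : 2 - x ≠ 0 := by linarith
    rw [hexp]
    field_simp
    linear_combination hroot
  case multiplier =>
    rw [hexp, mul_comm x]
    exact mul_inv_cancel₀ hpos.ne'
  case curvature =>
    rw [deriv_deriv_sq_mul_exp_sub_add_const]
    exact mul_ne_zero (fun hQ => hdiscr (discr_eq_zero_of_common_root hroot hQ)) (exp_ne_zero _)
  case transversality =>
    rw [deriv_sq_mul_exp_sub_add_const_param]
    positivity

lemma discr_pos_of_lt_three_sub_two_mul_sqrt_two {k : ℝ} (hk : k < 3 - 2 * √2) :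
    0 < k ^ 2 - 6 * k + 1 := by
  have hsqrt : √2 ^ 2 = 2 := sq_sqrt zero_le_two
  have hsqrt_pos : 0 < √2 := by positivity
  nlinarith [mul_pos (by linarith : 0 < 3 - 2 * √2 - k) (by linarith : 0 < 3 + 2 * √2 - k)]

/-- Fold bifurcations of the 1D Chialvo map for fixed `0 < k < 3 − 2√2`. With
`x_{0,1} = (k + 1 − √(k² − 6k + 1))/2`, `x_{0,2} = (k + 1 + √(k² − 6k + 1))/2` and
`r_{0,i} = x_{0,i} − ln((2 − x_{0,i}) x_{0,i})`, one has `k < x_{0,1} < x_{0,2} < 2`,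
each `x_{0,i}` is a fixed point of `f(x,r) = x² exp(r − x) + k` at parameter `r_{0,i}`
with multiplier `1`, and the fold nondegeneracy conditions
`∂²f/∂x²(x_{0,i}, r_{0,i}) ≠ 0` and `∂f/∂r(x_{0,i}, r_{0,i}) ≠ 0` hold. -/
theorem chialvo_fold_bifurcation_two_branches (k x₀₁ x₀₂ r₀₁ r₀₂ : ℝ)
    (hk0 : 0 < k) (hk1 : k < 3 - 2 * Real.sqrt 2)
    (hx1 : x₀₁ = (k + 1 - Real.sqrt (k ^ 2 - 6 * k + 1)) / 2)
    (hx2 : x₀₂ = (k + 1 + Real.sqrt (k ^ 2 - 6 * k + 1)) / 2)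
    (hr1 : r₀₁ = x₀₁ - Real.log ((2 - x₀₁) * x₀₁))
    (hr2 : r₀₂ = x₀₂ - Real.log ((2 - x₀₂) * x₀₂)) :
    k < x₀₁ ∧ x₀₁ < x₀₂ ∧ x₀₂ < 2 ∧
    x₀₁ ^ 2 * Real.exp (r₀₁ - x₀₁) + k = x₀₁ ∧
    x₀₂ ^ 2 * Real.exp (r₀₂ - x₀₂) + k = x₀₂ ∧
    x₀₁ * (2 - x₀₁) * Real.exp (r₀₁ - x₀₁) = 1 ∧
    x₀₂ * (2 - x₀₂) * Real.exp (r₀₂ - x₀₂) = 1 ∧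
    deriv (deriv (fun x : ℝ => x ^ 2 * Real.exp (r₀₁ - x) + k)) x₀₁ ≠ 0 ∧
    deriv (deriv (fun x : ℝ => x ^ 2 * Real.exp (r₀₂ - x) + k)) x₀₂ ≠ 0 ∧
    deriv (fun r : ℝ => x₀₁ ^ 2 * Real.exp (r - x₀₁) + k) r₀₁ ≠ 0 ∧
    deriv (fun r : ℝ => x₀₂ ^ 2 * Real.exp (r - x₀₂) + k) r₀₂ ≠ 0 := by
  have hD := discr_pos_of_lt_three_sub_two_mul_sqrt_two hk1
  set s := √(k ^ 2 - 6 * k + 1)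
  have hs : s ^ 2 = k ^ 2 - 6 * k + 1 := sq_sqrt hD.le
  have hs_pos : 0 < s := sqrt_pos.mpr hD
  have hk_lt_one : k < 1 := by linarith [one_lt_sqrt_two]
  have hs_lt_one_sub : s < 1 - k := (sqrt_lt' (by linarith)).2 (by nlinarith)
  have hs_lt_three_sub : s < 3 - k := (sqrt_lt' (by linarith)).2 (by nlinarith)
  have hkx₀₁ : k < x₀₁ := by rw [hx1]; linarith
  have hx₀₁₂ : x₀₁ < x₀₂ := by rw [hx1, hx2]; linarith
  have hx₀₂2 : x₀₂ < 2 := by rw [hx2]; linarith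
  obtain ⟨fix₁, mul₁, curv₁, trans₁⟩ := chialvo_fold_conditions (by linarith) (by linarith)
    (sq_eq_of_eq_add_sqrt_discr_div_two (neg_sq s ▸ hs) (hx1.trans (by ring))) hD.ne' hr1
  obtain ⟨fix₂, mul₂, curv₂, trans₂⟩ := chialvo_fold_conditions (by linarith) hx₀₂2
    (sq_eq_of_eq_add_sqrt_discr_div_two hs hx2) hD.ne' hr2
  exact ⟨hkx₀₁, hx₀₁₂, hx₀₂2, fix₁, fix₂, mul₁, mul₂, curv₁, curv₂, trans₁, trans₂⟩
end

section
/- For every k with 0 ≤ k < 2 there exists r* = r*(k) ∈ ℝ such that for all r ≥ r* the one-dimensional Chialvo map f_{r,k}(x) = x²·exp(r − x) + k possesses a fixed point x_f > 2 which is unstable, i.e. f_{r,k}(x_f) = x_f and |f'_{r,k}(x_f)| > 1. -/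
/-!
For large `r` the point `4` is mapped above itself, while `f_{r,k}(x) - x → -∞` as `x → ∞`, so
the intermediate value theorem gives a fixed point `x > 4`. At a fixed point `x² e^{r-x} = x - k`,
which turns the derivative into `(2 - x)(x - k) / x`; for `x > 4` and `k ≤ 2` its modulus is at
least `(x - 2)² / x > 1`.
-/

open Real Filter Function Set Topology

noncomputable def chialvo (r k x : ℝ) : ℝ := x ^ 2 * exp (r - x) + k

lemma hasDerivAt_chialvo (r k x : ℝ) :
    HasDerivAt (chialvo r k) (x * (2 - x) * exp (r - x)) x := by
  refine (((hasDerivAt_pow 2 x).fun_mul ((hasDerivAt_id' x).const_sub r).exp).add_const k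
    ).congr_deriv ?_
  push_cast
  ring

lemma deriv_chialvo_of_isFixedPt {r k x : ℝ} (hfix : IsFixedPt (chialvo r k) x) (hx : x ≠ 0) :
    deriv (chialvo r k) x = (2 - x) * (x - k) / x := by
  have hsq : x ^ 2 * exp (r - x) = x - k := by
    unfold IsFixedPt chialvo at hfix
    linarith
  rw [(hasDerivAt_chialvo r k x).deriv, eq_div_iff hx, ← hsq]
  ring

lemma one_lt_abs_deriv_chialvo_of_isFixedPt {r k x : ℝ} (hk : k ≤ 2) (hx : 4 < x)
    (hfix : IsFixedPt (chialvo r k) x) : 1 < |deriv (chialvo r k) x| := by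
  have hx0 : 0 < x := by linarith
  rw [deriv_chialvo_of_isFixedPt hfix hx0.ne', abs_div, abs_of_pos hx0, one_lt_div hx0,
    abs_of_nonpos (mul_nonpos_of_nonpos_of_nonneg (by linarith) (by linarith))]
  nlinarith

lemma tendsto_chialvo_sub_self_atBot (r k : ℝ) :
    Tendsto (fun x => chialvo r k x - x) atTop atBot := by
  have hdecay : Tendsto (fun x => exp r * (x ^ 2 * exp (-x))) atTop (𝓝 0) := by
    simpa using (tendsto_pow_mul_exp_neg_atTop_nhds_zero 2).const_mul (exp r)
  refine (hdecay.add_atBot (tendsto_atBot_add_const_left _ k tendsto_neg_atTop_atBot)).congr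
    fun x => ?_
  rw [chialvo, sub_eq_add_neg r x, exp_add]
  ring

lemma exists_isFixedPt_chialvo_gt {r k a : ℝ} (ha : a < chialvo r k a) :
    ∃ x, a < x ∧ IsFixedPt (chialvo r k) x := by
  have hcont : ContinuousOn (fun x => chialvo r k x - x) (Ici a) := by
    unfold chialvo
    fun_prop
  obtain ⟨x, hax, hx⟩ := intermediate_value_Ioi' hcont (tendsto_chialvo_sub_self_atBot r k)
    (show (0 : ℝ) < chialvo r k a - a by linarith)
  exact ⟨x, hax, sub_eq_zero.1 hx⟩

lemma eventually_lt_chialvo {a : ℝ} (ha : a ≠ 0) (k : ℝ) :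
    ∀ᶠ r in atTop, a < chialvo r k a := by
  have hgrow : Tendsto (fun r => chialvo r k a) atTop atTop :=
    tendsto_atTop_add_const_right _ k <| (tendsto_exp_atTop.comp
      (tendsto_atTop_add_const_right _ (-a) tendsto_id)).const_mul_atTop (by positivity)
  exact hgrow.eventually_gt_atTop a

theorem chialvo_unstable_fixed_point_exists_general (k : ℝ) (hk2 : k < 2) :
    ∃ rstar : ℝ, ∀ r : ℝ, rstar ≤ r →
      ∃ xf : ℝ, 2 < xf ∧ xf ^ 2 * Real.exp (r - xf) + k = xf ∧
        1 < |deriv (fun x : ℝ => x ^ 2 * Real.exp (r - x) + k) xf| := by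
  obtain ⟨rstar, hrstar⟩ := eventually_atTop.1 (eventually_lt_chialvo (a := 4) (by norm_num) k)
  refine ⟨rstar, fun r hr => ?_⟩
  obtain ⟨x, hx, hfix⟩ := exists_isFixedPt_chialvo_gt (hrstar r hr)
  exact ⟨x, by linarith, hfix, one_lt_abs_deriv_chialvo_of_isFixedPt hk2.le hx hfix⟩

/-- For every `0 ≤ k < 2` there exists `r*` such that for all `r ≥ r*` the 1D
Chialvo map `f_{r,k}(x) = x² exp(r − x) + k` has an unstable fixed point `x_f > 2`:
`f_{r,k}(x_f) = x_f` and `|f'_{r,k}(x_f)| > 1`. -/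
theorem chialvo_unstable_fixed_point_exists (k : ℝ) (hk0 : 0 ≤ k) (hk2 : k < 2) :
    ∃ rstar : ℝ, ∀ r : ℝ, rstar ≤ r →
      ∃ xf : ℝ, 2 < xf ∧ xf ^ 2 * Real.exp (r - xf) + k = xf ∧
        1 < |deriv (fun x : ℝ => x ^ 2 * Real.exp (r - x) + k) xf| :=
  chialvo_unstable_fixed_point_exists_general k hk2
end
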